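/- arXiv:math/0210064 — 2 statements merged into one kernel-verified Lean document; each statement's English description precedes it below -/
import Mathlib

section
/- Let V and L be finite sets of monomials of degree k in variables x_1,...,x_n with the same cardinality, such that V is strongly stable (if a monomial x_i·m ∈ V and j < i then x_j·m ∈ V) and L is a lexicographic segment (if m ∈ L and n is a monomial of degree k with n > m in lex order then n ∈ L). If x_i^k ∈ L for some i, then x_i^k ∈ V. -/
/-- The monomial `x_i^k` as an exponent vector. -/
def purePower {n : ℕ} (i : Fin n) (k : ℕ) : Fin n → ℕ :=
  fun t => if t = i then k else 0

/-- The exponent vector obtained from `m` by replacing one factor `x_s` by `x_j`. -/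
def moveVar {n : ℕ} (m : Fin n → ℕ) (s j : Fin n) : Fin n → ℕ :=
  fun t => if t = s then m s - 1 else if t = j then m j + 1 else m t

/-- A set of monomials is strongly stable if whenever `m ∈ V` is divisible by `x_s`
and `j < s`, then `(m / x_s) * x_j ∈ V`. -/
def StronglyStableSet {n : ℕ} (V : Finset (Fin n → ℕ)) : Prop :=
  ∀ m ∈ V, ∀ s j : Fin n, j < s → 0 < m s → moveVar m s j ∈ V

/-- `m >_lex m'` : at the first index where they differ, `m` has larger exponent. -/
def LexGT {n : ℕ} (m m' : Fin n → ℕ) : Prop :=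
  ∃ i : Fin n, (∀ j : Fin n, j < i → m j = m' j) ∧ m' i < m i

/-- A set of degree-`k` monomials is a lex segment. -/
def LexSegmentSet {n k : ℕ} (L : Finset (Fin n → ℕ)) : Prop :=
  ∀ m ∈ L, ∀ m' : Fin n → ℕ, (∑ t, m' t) = k → LexGT m' m → m' ∈ L

/-- A degree-`k` monomial supported only at `i` equals `x_i^k`. -/
lemma eq_purePower_of_support {n k : ℕ} (i : Fin n) (m : Fin n → ℕ)
    (hdeg : (∑ t, m t) = k) (h0 : ∀ t : Fin n, t ≠ i → m t = 0) :
    m = purePower i k := by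
  funext t
  unfold purePower
  by_cases ht : t = i
  · subst ht
    simp only [if_pos rfl]
    rw [← hdeg]
    refine (Finset.sum_eq_single_of_mem t (Finset.mem_univ t) ?_).symm
    intro b _ hb
    exact h0 b hb
  · simp [ht, h0 t ht]

/-- Collapsing: if `m ∈ V` has degree `k` and no support below `i`, then repeatedly moving
variables above `i` down to `i` produces `x_i^k ∈ V`. -/
lemma collapse {n k : ℕ} (V : Finset (Fin n → ℕ)) (hV : StronglyStableSet V) (i : Fin n) :
    ∀ (c : ℕ) (m : Fin n → ℕ), m ∈ V → (∑ t, m t) = k → (∀ j : Fin n, j < i → m j = 0) →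
      (∑ t ∈ Finset.univ.filter (fun t => i < t), m t) ≤ c → purePower i k ∈ V := by
  intro c
  induction c with
  | zero =>
    intro m hm hdeg hlow hmeas
    have hhigh : ∀ t : Fin n, i < t → m t = 0 := by
      intro t ht
      exact Finset.sum_eq_zero_iff.mp (Nat.le_zero.mp hmeas) t
        (Finset.mem_filter.mpr ⟨Finset.mem_univ t, ht⟩)
    have heq : m = purePower i k := by
      refine eq_purePower_of_support i m hdeg (fun t ht => ?_)
      rcases lt_trichotomy t i with h | h | h
      · exact hlow t h
      · exact absurd h ht
      · exact hhigh t h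
    rw [← heq]; exact hm
  | succ c ih =>
    intro m hm hdeg hlow hmeas
    by_cases hex : ∃ s : Fin n, i < s ∧ 0 < m s
    · obtain ⟨s, hs, hpos⟩ := hex
      have hsne : s ≠ i := Fin.ne_of_gt hs
      have hm' : moveVar m s i ∈ V := hV m hm s i hs hpos
      have hpt : ∀ t : Fin n, moveVar m s i t + (if t = s then 1 else 0)
          = m t + (if t = i then 1 else 0) := by
        intro t
        unfold moveVar
        by_cases h1 : t = s
        · subst h1; simp [hsne, Nat.sub_add_cancel hpos]
        · by_cases h2 : t = i
          · subst h2; simp [h1]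
          · simp [h1, h2]
      have hdeg' : (∑ t, moveVar m s i t) = k := by
        have hsum := Finset.sum_congr rfl (fun t (_ : t ∈ Finset.univ) => hpt t)
        rw [Finset.sum_add_distrib, Finset.sum_add_distrib] at hsum
        simp only [Finset.sum_ite_eq' Finset.univ, Finset.mem_univ, if_true] at hsum
        omega
      have hlow' : ∀ j : Fin n, j < i → moveVar m s i j = 0 := by
        intro j hj
        unfold moveVar
        have h1 : j ≠ s := Fin.ne_of_lt (lt_trans hj hs)
        have h2 : j ≠ i := Fin.ne_of_lt hj
        simp [h1, h2, hlow j hj]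
      have hmeas' : (∑ t ∈ Finset.univ.filter (fun t => i < t), moveVar m s i t) ≤ c := by
        have hsum := Finset.sum_congr rfl
          (fun t (_ : t ∈ Finset.univ.filter (fun t => i < t)) => hpt t)
        rw [Finset.sum_add_distrib, Finset.sum_add_distrib] at hsum
        have hs_mem : s ∈ Finset.univ.filter (fun t => i < t) :=
          Finset.mem_filter.mpr ⟨Finset.mem_univ s, hs⟩
        have hi_not : i ∉ Finset.univ.filter (fun t => i < t) := by
          simp [Finset.mem_filter]
        rw [Finset.sum_ite_eq' _ s (fun _ => 1), if_pos hs_mem] at hsum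
        rw [Finset.sum_ite_eq' _ i (fun _ => 1), if_neg hi_not] at hsum
        omega
      exact ih (moveVar m s i) hm' hdeg' hlow' hmeas'
    · push_neg at hex
      have heq : m = purePower i k := by
        refine eq_purePower_of_support i m hdeg (fun t ht => ?_)
        rcases lt_trichotomy t i with h | h | h
        · exact hlow t h
        · exact absurd h ht
        · exact Nat.le_zero.mp (hex t h)
      rw [← heq]; exact hm

/-- If `V` and `L` are sets of monomials of degree `k` with the same cardinality, `V` strongly
stable and `L` a lex segment, and `x_i^k ∈ L`, then `x_i^k ∈ V`. -/
theorem strongly_stable_contains_power_of_lex_segment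
    {n k : ℕ} (V L : Finset (Fin n → ℕ))
    (hVdeg : ∀ m ∈ V, (∑ t, m t) = k) (hLdeg : ∀ m ∈ L, (∑ t, m t) = k)
    (hcard : V.card = L.card)
    (hV : StronglyStableSet V) (hL : @LexSegmentSet n k L)
    (i : Fin n) (hi : purePower i k ∈ L) :
    purePower i k ∈ V := by
  by_contra hp
  have key : ∀ m ∈ V, ∃ j : Fin n, j < i ∧ 0 < m j := by
    intro m hm
    by_contra h
    push_neg at h
    have hlow : ∀ j : Fin n, j < i → m j = 0 := fun j hj => Nat.le_zero.mp (h j hj)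
    exact hp (collapse V hV i _ m hm (hVdeg m hm) hlow le_rfl)
  have hsub : V ⊆ L := by
    intro m hm
    obtain ⟨j, hji, hjpos⟩ := key m hm
    have hSne : (Finset.univ.filter (fun t : Fin n => 0 < m t ∧ t < i)).Nonempty :=
      ⟨j, Finset.mem_filter.mpr ⟨Finset.mem_univ j, hjpos, hji⟩⟩
    obtain ⟨-, hj₀pos, hj₀i⟩ := Finset.mem_filter.mp (Finset.min'_mem _ hSne)
    have hgt : LexGT m (purePower i k) := by
      refine ⟨(Finset.univ.filter (fun t : Fin n => 0 < m t ∧ t < i)).min' hSne, ?_, ?_⟩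
      · intro t ht
        have h1 : m t = 0 := by
          by_contra h'
          have htmem : t ∈ Finset.univ.filter (fun t : Fin n => 0 < m t ∧ t < i) :=
            Finset.mem_filter.mpr
              ⟨Finset.mem_univ t, Nat.pos_of_ne_zero h', lt_trans ht hj₀i⟩
          exact absurd (Finset.min'_le _ t htmem) (not_le.mpr ht)
        have h2 : purePower i k t = 0 := by
          unfold purePower
          simp [Fin.ne_of_lt (lt_trans ht hj₀i)]
        rw [h1, h2]
      · unfold purePower
        simpa [Fin.ne_of_lt hj₀i] using hj₀pos
    exact hL (purePower i k) hi m (hVdeg m hm) hgt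
  have hss : V ⊂ L := ⟨hsub, fun h => hp (h hi)⟩
  exact absurd hcard (Nat.ne_of_lt (Finset.card_lt_card hss))
end

section
/- Let R = K[x,y,z], I = (x^2 + yz, xy, xz), and τ the lexicographic term order with x > y > z. Then in_τ(I) = (x^2, xy, xz, yz^2, y^2z). -/
open MvPolynomial

variable {K : Type*} [Field K] {n : ℕ}

/-- `m` is the `r`-leading monomial of `f`. -/
def IsLeadMon (r : (Fin n →₀ ℕ) → (Fin n →₀ ℕ) → Prop)
    (f : MvPolynomial (Fin n) K) (m : Fin n →₀ ℕ) : Prop :=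
  m ∈ f.support ∧ ∀ m' ∈ f.support, m' ≠ m → r m' m

/-- The initial ideal of `I` with respect to the order `r`. -/
noncomputable def initialIdeal (r : (Fin n →₀ ℕ) → (Fin n →₀ ℕ) → Prop)
    (I : Ideal (MvPolynomial (Fin n) K)) : Ideal (MvPolynomial (Fin n) K) :=
  Ideal.span {p | ∃ f ∈ I, f ≠ 0 ∧ ∃ m, IsLeadMon r f m ∧ p = monomial m (1 : K)}

/-- The strict lexicographic order on monomials with `x_1 > x_2 > ... > x_n`:
`m <_lex m'` iff at the first index where they differ, `m'` has larger exponent. -/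
def LexLT {n : ℕ} (m m' : Fin n →₀ ℕ) : Prop :=
  ∃ i : Fin n, (∀ j : Fin n, j < i → m j = m' j) ∧ m i < m' i

/-!
The S-polynomials `y (x² + yz) - x (xy) = y²z` and `z (x² + yz) - x (xz) = yz²` show that
`B = {x² + yz, xy, xz, yz², y²z}` lies in `I`; its lex leading monomials are the five generators
on the right. `B` is a Gröbner basis because no nonzero element of `I` is supported on the
monomials `1, x, yᵏ, zᵏ, yz` that none of these divide: the substitution
`x ↦ st, y ↦ -s², z ↦ t²` kills `x² + yz`, sends `I` into the monomial ideal `(s³t, st³)`, and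
maps those monomials injectively to monomials outside it. Dividing an element of `I` by `B`
therefore leaves remainder zero, so its leading monomial is divisible by one of the five.
-/

open MonomialOrder

namespace MonomialOrder

variable {σ R : Type*} [CommRing R] [NoZeroDivisors R] (o : MonomialOrder σ)

theorem coeff_mul_eq_zero_of_not_degree_le {b q : MvPolynomial σ R} {d : σ →₀ ℕ}
    (hle : o.degree (b * q) ≼[o] d) (hb : ¬ o.degree b ≤ d) : (b * q).coeff d = 0 := by
  rcases eq_or_ne b 0 with rfl | hb0
  · simp
  rcases eq_or_ne q 0 with rfl | hq0
  · simp
  rcases hle.lt_or_eq with hlt | heq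
  · exact o.coeff_eq_zero_of_lt hlt
  · obtain rfl := o.toSyn.injective heq
    rw [o.degree_mul hb0 hq0] at hb
    exact absurd le_self_add hb

theorem exists_degree_le_of_mem {I : Ideal (MvPolynomial σ R)} {B : Set (MvPolynomial σ R)}
    (hBI : B ⊆ I) (hB : ∀ b ∈ B, IsUnit (o.leadingCoeff b))
    (hrem : ∀ r ∈ I, (∀ c ∈ r.support, ∀ b ∈ B, ¬ o.degree b ≤ c) → r = 0)
    {f : MvPolynomial σ R} (hf : f ∈ I) (hf0 : f ≠ 0) :
    ∃ b ∈ B, o.degree b ≤ o.degree f := by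
  by_contra! hnot
  obtain ⟨g, r, hfgr, hdeg, hr⟩ := o.div_set hB f
  set q := Finsupp.linearCombination _ (fun b : B ↦ (b : MvPolynomial σ R)) g with hq_def
  have hq : q ∈ I :=
    Ideal.span_le.mpr hBI ((Finsupp.mem_span_iff_linearCombination _ _ _).mpr ⟨g, rfl⟩)
  obtain rfl : r = 0 := hrem r (by simpa [hfgr] using sub_mem hf hq) hr
  have hcoeff : q.coeff (o.degree f) = 0 := by
    rw [hq_def, Finsupp.linearCombination_apply, Finsupp.sum, coeff_sum]
    refine Finset.sum_eq_zero fun b _ ↦ ?_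
    rw [smul_eq_mul, mul_comm]
    exact o.coeff_mul_eq_zero_of_not_degree_le (hdeg b) (hnot b b.2)
  rw [← add_zero q, ← hfgr] at hcoeff
  exact hf0 (o.coeff_degree_eq_zero_iff.mp hcoeff)

end MonomialOrder

theorem isLeadMon_iff (o : MonomialOrder (Fin n)) {f : MvPolynomial (Fin n) K}
    {d : Fin n →₀ ℕ} : IsLeadMon (· ≺[o] ·) f d ↔ f ≠ 0 ∧ o.degree f = d := by
  constructor
  · rintro ⟨hd, hmax⟩
    have hf0 : f ≠ 0 := by rintro rfl; simp at hd
    refine ⟨hf0, by_contra fun hne ↦ ?_⟩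
    exact (o.le_degree hd).not_gt (hmax _ (o.degree_mem_support hf0) hne)
  · rintro ⟨hf0, rfl⟩
    exact ⟨o.degree_mem_support hf0, fun d hd hne ↦
      (o.le_degree hd).lt_of_ne (o.toSyn.injective.ne hne)⟩

theorem initialIdeal_eq_span_leadingTerm (o : MonomialOrder (Fin n))
    {I : Ideal (MvPolynomial (Fin n) K)} {B : Set (MvPolynomial (Fin n) K)}
    (hBI : B ⊆ I) (hB : ∀ b ∈ B, o.Monic b)
    (hrem : ∀ r ∈ I, (∀ c ∈ r.support, ∀ b ∈ B, ¬ o.degree b ≤ c) → r = 0) :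
    initialIdeal (· ≺[o] ·) I = Ideal.span (o.leadingTerm '' B) := by
  have hlt : ∀ b ∈ B, o.leadingTerm b = monomial (o.degree b) 1 := fun b hb ↦ by
    rw [leadingTerm, (hB b hb).leadingCoeff_eq_one]
  apply le_antisymm
  · rw [initialIdeal, Ideal.span_le]
    rintro _ ⟨f, hf, hf0, d, hd, rfl⟩
    obtain ⟨-, rfl⟩ := (isLeadMon_iff o).mp hd
    obtain ⟨b, hb, hle⟩ := o.exists_degree_le_of_mem hBI
      (fun b hb ↦ (hB b hb).leadingCoeff_eq_one ▸ isUnit_one) hrem hf hf0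
    rw [← tsub_add_cancel_of_le hle, ← mul_one (1 : K), ← monomial_mul, ← hlt b hb]
    exact Ideal.mul_mem_left _ _ (Ideal.subset_span ⟨b, hb, rfl⟩)
  · rw [Ideal.span_le]
    rintro _ ⟨b, hb, rfl⟩
    exact Ideal.subset_span ⟨b, hBI hb, (hB b hb).ne_zero, _,
      (isLeadMon_iff o).mpr ⟨(hB b hb).ne_zero, rfl⟩, hlt b hb⟩

theorem Finsupp.le_iff_fin_three {a c : Fin 3 →₀ ℕ} :
    a ≤ c ↔ a 0 ≤ c 0 ∧ a 1 ≤ c 1 ∧ a 2 ≤ c 2 := by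
  simp [Finsupp.le_def, Fin.forall_fin_succ]

noncomputable def exampleIdeal : Ideal (MvPolynomial (Fin 3) K) :=
  Ideal.span {X 0 ^ 2 + X 1 * X 2, X 0 * X 1, X 0 * X 2}

noncomputable def exampleGroebnerBasis : Set (MvPolynomial (Fin 3) K) :=
  {X 0 ^ 2 + X 1 * X 2, X 0 * X 1, X 0 * X 2, X 1 * X 2 ^ 2, X 1 ^ 2 * X 2}

theorem exampleGroebnerBasis_subset :
    exampleGroebnerBasis ⊆ (exampleIdeal (K := K) : Set (MvPolynomial (Fin 3) K)) := by
  have hgen : {X 0 ^ 2 + X 1 * X 2, X 0 * X 1, X 0 * X 2} ⊆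
      (exampleIdeal (K := K) : Set (MvPolynomial (Fin 3) K)) :=
    Ideal.subset_span
  simp only [Set.insert_subset_iff, Set.singleton_subset_iff, SetLike.mem_coe] at hgen
  obtain ⟨hq, hxy, hxz⟩ := hgen
  simp only [exampleGroebnerBasis, Set.insert_subset_iff, Set.singleton_subset_iff,
    SetLike.mem_coe]
  refine ⟨hq, hxy, hxz, ?_, ?_⟩
  · convert sub_mem (Ideal.mul_mem_left _ (X 2) hq) (Ideal.mul_mem_left _ (X 0) hxz) using 1
    ring
  · convert sub_mem (Ideal.mul_mem_left _ (X 1) hq) (Ideal.mul_mem_left _ (X 0) hxy) using 1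
    ring

theorem lex_degree_X_mul_X_lt :
    lex.degree (X 1 * X 2 : MvPolynomial (Fin 3) K) ≺[lex]
      lex.degree (X 0 ^ 2 : MvPolynomial (Fin 3) K) := by
  rw [lex_lt_iff]
  simp only [degree_mul (X_ne_zero _) (X_ne_zero _), degree_pow, degree_X]
  exact ⟨0, by simp, by simp⟩

theorem monic_of_mem_exampleGroebnerBasis :
    ∀ b ∈ (exampleGroebnerBasis : Set (MvPolynomial (Fin 3) K)), lex.Monic b := by
  simp [exampleGroebnerBasis, Monic.mul, Monic.pow, Monic.add_of_lt, lex_degree_X_mul_X_lt]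

theorem leadingTerm_image_exampleGroebnerBasis :
    lex.leadingTerm '' (exampleGroebnerBasis : Set (MvPolynomial (Fin 3) K)) =
      {X 0 ^ 2, X 0 * X 1, X 0 * X 2, X 1 * X 2 ^ 2, X 1 ^ 2 * X 2} := by
  have hX (i : Fin 3) : lex.leadingTerm (X i : MvPolynomial (Fin 3) K) = X i := by
    rw [X, leadingTerm_monomial]
  have hXpow (i : Fin 3) (k : ℕ) :
      lex.leadingTerm (X i ^ k : MvPolynomial (Fin 3) K) = X i ^ k := by
    rw [X_pow_eq_monomial, leadingTerm_monomial]
  have hq : lex.leadingTerm (X 0 ^ 2 + X 1 * X 2 : MvPolynomial (Fin 3) K) = X 0 ^ 2 := by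
    rw [leadingTerm, degree_add_of_lt lex_degree_X_mul_X_lt,
      leadingCoeff_add_of_lt lex_degree_X_mul_X_lt, ← leadingTerm, hXpow]
  simp only [exampleGroebnerBasis, Set.image_insert_eq, Set.image_singleton, leadingTerm_mul,
    hq, hX, hXpow]

theorem lex_degree_image_exampleGroebnerBasis :
    lex.degree '' (exampleGroebnerBasis : Set (MvPolynomial (Fin 3) K)) =
      {Finsupp.single 0 2, Finsupp.single 0 1 + Finsupp.single 1 1,
        Finsupp.single 0 1 + Finsupp.single 2 1, Finsupp.single 1 1 + Finsupp.single 2 2,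
        Finsupp.single 1 2 + Finsupp.single 2 1} := by
  have hq : lex.degree (X 0 ^ 2 + X 1 * X 2 : MvPolynomial (Fin 3) K) = Finsupp.single 0 2 := by
    rw [degree_add_of_lt lex_degree_X_mul_X_lt, degree_pow, degree_X, Finsupp.smul_single_one]
  simp [exampleGroebnerBasis, Set.image_insert_eq, degree_mul, degree_pow, degree_X, hq]

theorem forall_exampleGroebnerBasis_not_degree_le_iff (c : Fin 3 →₀ ℕ) :
    (∀ b ∈ (exampleGroebnerBasis : Set (MvPolynomial (Fin 3) K)), ¬ lex.degree b ≤ c) ↔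
      c 0 ≤ 1 ∧ (c 0 = 1 → c 1 = 0 ∧ c 2 = 0) ∧ (c 1 = 0 ∨ c 2 = 0 ∨ c 1 = 1 ∧ c 2 = 1) := by
  rw [← Set.forall_mem_image (f := lex.degree) (p := fun d ↦ ¬ d ≤ c),
    lex_degree_image_exampleGroebnerBasis]
  simp only [Set.forall_mem_insert, Set.mem_singleton_iff, forall_eq, Finsupp.le_iff_fin_three,
    Finsupp.coe_add, Pi.add_apply, Finsupp.single_apply, Fin.reduceEq, reduceIte]
  omega

noncomputable def paramHom : MvPolynomial (Fin 3) K →ₐ[K] MvPolynomial (Fin 2) K :=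
  aeval ![X 0 * X 1, -X 0 ^ 2, X 1 ^ 2]

theorem paramHom_X_zero : paramHom (X 0 : MvPolynomial (Fin 3) K) = X 0 * X 1 := aeval_X _ _

theorem paramHom_X_one : paramHom (X 1 : MvPolynomial (Fin 3) K) = -X 0 ^ 2 := aeval_X _ _

theorem paramHom_X_two : paramHom (X 2 : MvPolynomial (Fin 3) K) = X 1 ^ 2 := aeval_X _ _

noncomputable def paramExp (c : Fin 3 →₀ ℕ) : Fin 2 →₀ ℕ :=
  Finsupp.single 0 (c 0 + 2 * c 1) + Finsupp.single 1 (c 0 + 2 * c 2)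

theorem paramExp_apply_zero (c : Fin 3 →₀ ℕ) : paramExp c 0 = c 0 + 2 * c 1 := by
  simp [paramExp]

theorem paramExp_apply_one (c : Fin 3 →₀ ℕ) : paramExp c 1 = c 0 + 2 * c 2 := by
  simp [paramExp]

theorem paramHom_monomial (c : Fin 3 →₀ ℕ) (a : K) :
    paramHom (monomial c a) = monomial (paramExp c) ((-1) ^ c 1 * a) := by
  have hexp : monomial (paramExp c) ((-1) ^ c 1 * a) =
      C ((-1) ^ c 1 * a) * (X 0 ^ (c 0 + 2 * c 1) * X 1 ^ (c 0 + 2 * c 2)) := by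
    rw [X_pow_eq_monomial, X_pow_eq_monomial, monomial_mul, one_mul, C_mul_monomial, mul_one,
      paramExp]
  rw [hexp, monomial_eq, Finsupp.prod_fintype _ _ (by simp), Fin.prod_univ_three]
  simp only [map_mul, map_pow, map_neg, map_one, algHom_C, algebraMap_eq, paramHom_X_zero,
    paramHom_X_one, paramHom_X_two]
  ring

-- `c 0 ≤ 1` is recovered from `paramExp c` as the parity of `c 0 + 2 * c 1`.
theorem paramExp_injOn : Set.InjOn paramExp {c : Fin 3 →₀ ℕ | c 0 ≤ 1} := by
  intro c hc c' hc' h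
  have h0 := congr($h 0)
  have h1 := congr($h 1)
  simp only [paramExp_apply_zero, paramExp_apply_one, Set.mem_ofPred_eq] at h0 h1 hc hc'
  ext i
  match i with
  | 0 => omega
  | 1 => omega
  | 2 => omega

theorem coeff_paramHom_paramExp {r : MvPolynomial (Fin 3) K} (hr : ∀ c ∈ r.support, c 0 ≤ 1)
    {c : Fin 3 →₀ ℕ} (hc : c ∈ r.support) :
    (paramHom r).coeff (paramExp c) = (-1) ^ c 1 * r.coeff c := by
  conv_lhs => rw [r.as_sum, map_sum]
  simp only [coeff_sum, paramHom_monomial, coeff_monomial]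
  rw [Finset.sum_eq_single_of_mem c hc fun c' hc' hne ↦
    if_neg (hne ∘ paramExp_injOn (hr c' hc') (hr c hc)), if_pos rfl]

theorem map_paramHom_exampleIdeal_le :
    (exampleIdeal (K := K)).map paramHom ≤ Ideal.span ((monomial · 1) ''
      {Finsupp.single 0 3 + Finsupp.single 1 1, Finsupp.single 0 1 + Finsupp.single 1 3}) := by
  set J : Ideal (MvPolynomial (Fin 2) K) := Ideal.span ((monomial · 1) ''
    {Finsupp.single 0 3 + Finsupp.single 1 1, Finsupp.single 0 1 + Finsupp.single 1 3})
  have h31 : X 0 ^ 3 * X 1 ∈ J := by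
    rw [X_pow_eq_monomial, X, monomial_mul, one_mul]
    exact Ideal.subset_span ⟨_, Set.mem_insert _ _, rfl⟩
  have h13 : X 0 * X 1 ^ 3 ∈ J := by
    rw [X_pow_eq_monomial, X, monomial_mul, one_mul]
    exact Ideal.subset_span ⟨_, Set.mem_insert_of_mem _ rfl, rfl⟩
  have hq : paramHom (X 0 ^ 2 + X 1 * X 2 : MvPolynomial (Fin 3) K) = 0 := by
    rw [map_add, map_pow, map_mul, paramHom_X_zero, paramHom_X_one, paramHom_X_two]; ring
  have hxy : paramHom (X 0 * X 1 : MvPolynomial (Fin 3) K) = -(X 0 ^ 3 * X 1) := by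
    rw [map_mul, paramHom_X_zero, paramHom_X_one]; ring
  have hxz : paramHom (X 0 * X 2 : MvPolynomial (Fin 3) K) = X 0 * X 1 ^ 3 := by
    rw [map_mul, paramHom_X_zero, paramHom_X_two]; ring
  rw [exampleIdeal, Ideal.map_span, Ideal.span_le]
  simp only [Set.image_insert_eq, Set.image_singleton, Set.insert_subset_iff,
    Set.singleton_subset_iff, SetLike.mem_coe, hq, hxy, hxz]
  exact ⟨J.zero_mem, J.neg_mem h31, h13⟩

theorem eq_zero_of_mem_exampleIdeal {r : MvPolynomial (Fin 3) K} (hr : r ∈ exampleIdeal)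
    (hstd : ∀ c ∈ r.support, ∀ b ∈ exampleGroebnerBasis (K := K), ¬ lex.degree b ≤ c) :
    r = 0 := by
  simp only [forall_exampleGroebnerBasis_not_degree_le_iff] at hstd
  by_contra hr0
  obtain ⟨c, hc⟩ := Finset.nonempty_of_ne_empty (mt support_eq_empty.mp hr0)
  have hψ : paramExp c ∈ (paramHom r).support := by
    rw [mem_support_iff, coeff_paramHom_paramExp (fun c hc ↦ (hstd c hc).1) hc]
    exact mul_ne_zero (pow_ne_zero _ (neg_ne_zero.mpr one_ne_zero)) (mem_support_iff.mp hc)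
  obtain ⟨e, he, hle⟩ := mem_ideal_span_monomial_image.mp
    (map_paramHom_exampleIdeal_le (Ideal.mem_map_of_mem _ hr)) _ hψ
  obtain ⟨h0, h1, h2⟩ := hstd c hc
  rw [Finsupp.le_def, Fin.forall_fin_two, paramExp_apply_zero, paramExp_apply_one] at hle
  simp only [Set.mem_insert_iff, Set.mem_singleton_iff] at he
  rcases he with rfl | rfl <;>
    simp only [Finsupp.coe_add, Pi.add_apply, Finsupp.single_apply, Fin.reduceEq, reduceIte]
      at hle <;>
    omega

/-- For `I = (x² + yz, xy, xz) ⊆ K[x,y,z]` and the lex order with `x > y > z`,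
`in_lex(I) = (x², xy, xz, yz², y²z)`. -/
theorem initial_ideal_example
    (I : Ideal (MvPolynomial (Fin 3) K))
    (hI : I = Ideal.span { (X 0) ^ 2 + X 1 * X 2, X 0 * X 1, X 0 * X 2 }) :
    initialIdeal LexLT I =
      Ideal.span { (X 0) ^ 2, X 0 * X 1, X 0 * X 2,
        X 1 * (X 2) ^ 2, (X 1) ^ 2 * X 2 } := by
  subst hI
  change initialIdeal (· ≺[lex] ·) exampleIdeal = _
  rw [initialIdeal_eq_span_leadingTerm lex exampleGroebnerBasis_subset
      monic_of_mem_exampleGroebnerBasis fun r hr ↦ eq_zero_of_mem_exampleIdeal hr,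
    leadingTerm_image_exampleGroebnerBasis]
end
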